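/- arXiv:1103.1601 — 4 statements merged into one kernel-verified Lean document; each statement's English description precedes it below -/
import Mathlib

section
/- Any surjective group homomorphism from the free group on two generators to itself is an isomorphism. -/
/-!
Free groups of finite rank are residually finite, and a finitely generated residually finite
group `G` is Hopfian (Mal'cev): if `φ` is surjective and `g ≠ 1`, pick a finite quotient
`π : G → Q` with `π g ≠ 1`. Precomposition with `φ` is an injective self-map of the finite set
`Hom(G, Q)`, hence surjective, so `π = ψ ∘ φ` for some `ψ`, and `φ g = 1` would force `π g = 1`.

Residual finiteness of `F₂` comes from Sanov's embedding into `SL(2, ℤ)`, obtained by ping-pong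
on the nonzero vectors of `ℤ²`, followed by reduction of matrix entries modulo large integers.
-/

open Function Matrix MatrixGroups

section Hopfian

variable {G G' Q : Type*} [Group G] [Group G'] [Group Q]

instance MonoidHom.finite_of_fg [Group.FG G] [Finite Q] : Finite (G →* Q) := by
  obtain ⟨α, _, π, hπ⟩ := Group.fg_iff_exists_freeGroup_hom_surjective_finite.mp ‹Group.FG G›
  have : Finite (FreeGroup α →* Q) := .of_equiv _ FreeGroup.lift
  exact .of_injective (fun f ↦ f.comp π) fun _ _ h ↦ (MonoidHom.cancel_right hπ).mp h

theorem Group.ResiduallyFinite.of_injective [Group.ResiduallyFinite G'] {f : G →* G'}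
    (hf : Injective f) : Group.ResiduallyFinite G := by
  refine Group.residuallyFinite_iff_exists_finiteIndexNormalSubgroup.mpr fun g hg ↦ ?_
  obtain ⟨H, hgH⟩ :=
    Group.exists_finiteIndexNormalSubgroup_notMem (f g) ((map_ne_one_iff f hf).mpr hg)
  exact ⟨H.comap f, hgH⟩

theorem Group.ResiduallyFinite.injective_of_surjective [Group.FG G] [Group.ResiduallyFinite G]
    {φ : G →* G} (hφ : Surjective φ) : Injective φ := by
  refine (injective_iff_map_eq_one φ).mpr fun g hg ↦ by_contra fun hg1 ↦ ?_
  obtain ⟨H, hgH⟩ := Group.exists_finiteIndexNormalSubgroup_notMem g hg1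
  have hcomp : Injective fun f : G →* G ⧸ H.toSubgroup ↦ f.comp φ :=
    fun _ _ h ↦ (MonoidHom.cancel_right hφ).mp h
  obtain ⟨ψ, hψ⟩ := Finite.injective_iff_surjective.mp hcomp (QuotientGroup.mk' H.toSubgroup)
  refine hgH ((QuotientGroup.eq_one_iff g).mp ?_)
  rw [← QuotientGroup.mk'_apply, ← hψ, MonoidHom.comp_apply, hg, map_one]

end Hopfian

namespace Matrix.SpecialLinearGroup

instance residuallyFinite_int {n : Type*} [Fintype n] [DecidableEq n] :
    Group.ResiduallyFinite (SpecialLinearGroup n ℤ) := by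
  refine Group.residuallyFinite_of_forall_exists_finite_monoidHom fun g hg ↦ ?_
  obtain ⟨i, j, hij⟩ : ∃ i j, g i j ≠ (1 : SpecialLinearGroup n ℤ) i j := by
    by_contra! h
    exact hg (Subtype.ext (Matrix.ext h))
  set N := (g i j - (1 : SpecialLinearGroup n ℤ) i j).natAbs + 1
  refine ⟨SpecialLinearGroup n (ZMod N), inferInstance, inferInstance,
    map (Int.castRingHom (ZMod N)), fun h ↦ hij ?_⟩
  have hcast : ((g i j : ℤ) : ZMod N) = (((1 : SpecialLinearGroup n ℤ) i j : ℤ) : ZMod N) := by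
    have := congrArg (fun A : SpecialLinearGroup n (ZMod N) ↦ A i j) h
    simpa [map_apply_coe, one_apply, apply_ite] using this
  rw [ZMod.intCast_eq_intCast_iff_dvd_sub] at hcast
  exact (sub_eq_zero.mp (Int.eq_zero_of_dvd_of_natAbs_lt_natAbs hcast (by omega))).symm

section Transvection

variable {ι F : Type*} [DecidableEq ι] [Fintype ι] [CommRing F]

theorem transvection_smul_apply_self {i j : ι} (hij : i ≠ j) (b : F) (v : ι → F) :
    (transvection hij b • v) i = v i + b * v j := by
  simp [SpecialLinearGroup.smul_def, transvection_coe, add_mulVec, single_mulVec]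

theorem transvection_smul_apply_of_ne {i j k : ι} (hij : i ≠ j) (hk : k ≠ i) (b : F)
    (v : ι → F) :
    (transvection hij b • v) k = v k := by
  simp [SpecialLinearGroup.smul_def, transvection_coe, add_mulVec, single_mulVec, hk]

end Transvection

end Matrix.SpecialLinearGroup

def SubMulAction.nonZero (G M : Type*) [Group G] [AddMonoid M] [DistribMulAction G M] :
    SubMulAction G M where
  carrier := {x | x ≠ 0}
  smul_mem' g _ hx := (smul_ne_zero_iff_ne g).mpr hx

@[simp]
theorem SubMulAction.mem_nonZero {G M : Type*} [Group G] [AddMonoid M] [DistribMulAction G M]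
    {x : M} : x ∈ nonZero G M ↔ x ≠ 0 :=
  Iff.rfl

theorem Fin.two_ne_rev (i : Fin 2) : i ≠ i.rev := by
  fin_cases i <;> decide

theorem Fin.two_eq_rev_of_ne {i j : Fin 2} (h : i ≠ j) : j = i.rev := by
  fin_cases i <;> fin_cases j <;> simp_all

namespace Int

theorem abs_lt_abs_add_three_mul {x y : ℤ} (h0 : x ≠ 0 ∨ y ≠ 0)
    (h : ¬(|y| < |x| ∧ x * y < 0)) : |y| < |x + 3 * y| ∧ 0 ≤ (x + 3 * y) * y := by
  simp only [mul_neg_iff, mul_nonneg_iff, abs_eq_max_neg] at h ⊢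
  omega

theorem abs_lt_abs_sub_three_mul {x y : ℤ} (h0 : x ≠ 0 ∨ y ≠ 0)
    (h : ¬(|y| < |x| ∧ 0 ≤ x * y)) : |y| < |x - 3 * y| ∧ (x - 3 * y) * y < 0 := by
  simp only [mul_neg_iff, mul_nonneg_iff, abs_eq_max_neg] at h ⊢
  omega

end Int

namespace Sanov

abbrev NonzeroVector : Type := SubMulAction.nonZero SL(2, ℤ) (Fin 2 → ℤ)

-- Sanov's `2` would not do here: this version of ping-pong needs `generator i • v` to land in
-- `sameSignCone i` for every `v ∉ oppositeSignCone i`, which fails for `2` at `v = (-1, 1)`.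
def generator (i : Fin 2) : SL(2, ℤ) :=
  SpecialLinearGroup.transvection (Fin.two_ne_rev i) 3

def cone (i : Fin 2) : Set (Fin 2 → ℤ) :=
  {v | |v i.rev| < |v i|}

theorem disjoint_cone {i j : Fin 2} (h : i ≠ j) : Disjoint (cone i) (cone j) := by
  refine Set.disjoint_left.mpr fun v hi hj ↦ ?_
  rw [cone, Set.mem_ofPred_eq, Fin.two_eq_rev_of_ne h, Fin.rev_rev] at hj
  exact hi.asymm hj

def sameSignCone (i : Fin 2) : Set NonzeroVector :=
  {v | v.1 ∈ cone i ∧ 0 ≤ v.1 i * v.1 i.rev}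

def oppositeSignCone (i : Fin 2) : Set NonzeroVector :=
  {v | v.1 ∈ cone i ∧ v.1 i * v.1 i.rev < 0}

theorem apply_ne_zero_or_apply_rev_ne_zero (v : NonzeroVector) (i : Fin 2) :
    v.1 i ≠ 0 ∨ v.1 i.rev ≠ 0 := by
  by_contra! h
  refine v.2 (funext fun k ↦ ?_)
  rcases eq_or_ne i k with rfl | hk
  · exact h.1
  · rw [Fin.two_eq_rev_of_ne hk]; exact h.2

theorem generator_smul_mem (i : Fin 2) {v : NonzeroVector} (hv : v ∉ oppositeSignCone i) :
    generator i • v ∈ sameSignCone i := by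
  simp only [sameSignCone, cone, Set.mem_ofPred_eq, SubMulAction.val_smul, generator,
    SpecialLinearGroup.transvection_smul_apply_self,
    SpecialLinearGroup.transvection_smul_apply_of_ne _ (Fin.two_ne_rev i).symm]
  exact Int.abs_lt_abs_add_three_mul (apply_ne_zero_or_apply_rev_ne_zero v i) hv

theorem generator_inv_smul_mem (i : Fin 2) {v : NonzeroVector} (hv : v ∉ sameSignCone i) :
    (generator i)⁻¹ • v ∈ oppositeSignCone i := by
  simp only [oppositeSignCone, cone, Set.mem_ofPred_eq, SubMulAction.val_smul, generator,
    SpecialLinearGroup.transvection_inv, SpecialLinearGroup.transvection_smul_apply_self,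
    SpecialLinearGroup.transvection_smul_apply_of_ne _ (Fin.two_ne_rev i).symm, neg_mul,
    ← sub_eq_add_neg]
  exact Int.abs_lt_abs_sub_three_mul (apply_ne_zero_or_apply_rev_ne_zero v i) hv

theorem injective_lift_generator : Injective (FreeGroup.lift generator) := by
  have hcone {i j : Fin 2} (h : i ≠ j) :
      Disjoint (Subtype.val ⁻¹' cone i : Set NonzeroVector) (Subtype.val ⁻¹' cone j) :=
    (disjoint_cone h).preimage Subtype.val
  refine FreeGroup.injective_lift_of_ping_pong generator sameSignCone oppositeSignCone
    (fun i ↦ ⟨⟨Pi.single i 1, by simp⟩, by simp [sameSignCone, cone, (Fin.two_ne_rev i).symm]⟩)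
    (fun _ _ h ↦ (hcone h).mono (fun _ hv ↦ hv.1) (fun _ hv ↦ hv.1))
    (fun _ _ h ↦ (hcone h).mono (fun _ hv ↦ hv.1) (fun _ hv ↦ hv.1))
    (fun i j ↦ ?_)
    (fun i ↦ Set.smul_set_subset_iff.mpr fun _ hv ↦ generator_smul_mem i hv)
    (fun i ↦ Set.smul_set_subset_iff.mpr fun _ hv ↦ generator_inv_smul_mem i hv)
  rcases eq_or_ne i j with rfl | h
  · exact Set.disjoint_left.mpr fun _ hX hY ↦ hY.2.not_ge hX.2
  · exact (hcone h).mono (fun _ hv ↦ hv.1) (fun _ hv ↦ hv.1)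

end Sanov

instance FreeGroup.residuallyFinite_fin_two : Group.ResiduallyFinite (FreeGroup (Fin 2)) :=
  .of_injective Sanov.injective_lift_generator

/-- Any surjective group homomorphism from the free group on two generators
to itself is an isomorphism (i.e. bijective). -/
theorem free_group_two_surjective_endo_bijective
    (φ : FreeGroup (Fin 2) →* FreeGroup (Fin 2))
    (hφ : Function.Surjective φ) : Function.Bijective φ :=
  ⟨Group.ResiduallyFinite.injective_of_surjective hφ, hφ⟩
end

section
/- The presentation ⟨x, y | yxyx⁻¹y⁻¹x⁻¹, x³y⁻²⟩ presents the trivial group. -/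
open FreeGroup

/-- The presentation ⟨x, y | yxyx⁻¹y⁻¹x⁻¹, x³y⁻²⟩ presents the trivial group:
the normal closure of the two relators is the whole free group on two
generators. -/
theorem presentation_L21_trivial :
    let x : FreeGroup (Fin 2) := FreeGroup.of 0
    let y : FreeGroup (Fin 2) := FreeGroup.of 1
    Subgroup.normalClosure ({y * x * y * x⁻¹ * y⁻¹ * x⁻¹, x ^ 3 * y⁻¹ ^ 2} :
      Set (FreeGroup (Fin 2))) = ⊤ := by
  intro x y
  set S : Set (FreeGroup (Fin 2)) := {y * x * y * x⁻¹ * y⁻¹ * x⁻¹, x ^ 3 * y⁻¹ ^ 2} with hS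
  set N := Subgroup.normalClosure S with hN
  -- work in the quotient
  let π := QuotientGroup.mk' N
  set X := π x with hX
  set Y := π y with hY
  have e1 : Y * X * Y * X⁻¹ * Y⁻¹ * X⁻¹ = 1 := by
    have : π (y * x * y * x⁻¹ * y⁻¹ * x⁻¹) = 1 := by
      rw [QuotientGroup.mk'_apply, QuotientGroup.eq_one_iff]
      exact Subgroup.subset_normalClosure (by simp [hS])
    simpa [hX, hY] using this
  have e2 : X ^ 3 * Y⁻¹ ^ 2 = 1 := by
    have : π (x ^ 3 * y⁻¹ ^ 2) = 1 := by
      rw [QuotientGroup.mk'_apply, QuotientGroup.eq_one_iff]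
      exact Subgroup.subset_normalClosure (by simp [hS])
    simpa [hX, hY] using this
  have h1 : Y * X * Y = X * Y * X := by
    rw [← mul_inv_eq_one, ← e1]; group
  have h2 : X ^ 3 = Y ^ 2 := by
    rw [← mul_inv_eq_one, ← e2]; group
  have hc : X ^ 3 * (Y * X) = (Y * X) * X ^ 3 := by
    calc X ^ 3 * (Y * X) = Y ^ 2 * Y * X := by rw [h2]; group
      _ = Y * Y ^ 2 * X := by group
      _ = Y * X ^ 3 * X := by rw [h2]
      _ = (Y * X) * X ^ 3 := by group
  have hu : (Y * X) * Y * (Y * X)⁻¹ = X := by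
    rw [h1]; group
  have hY2 : (Y * X) * Y ^ 2 * (Y * X)⁻¹ = X ^ 2 := by
    calc (Y * X) * Y ^ 2 * (Y * X)⁻¹
        = ((Y * X) * Y * (Y * X)⁻¹) * ((Y * X) * Y * (Y * X)⁻¹) := by rw [sq]; group
      _ = X * X := by rw [hu]
      _ = X ^ 2 := (sq X).symm
  have hX3 : X ^ 3 = X ^ 2 := by
    calc X ^ 3 = (Y * X) * X ^ 3 * (Y * X)⁻¹ := by rw [← hc]; group
      _ = (Y * X) * Y ^ 2 * (Y * X)⁻¹ := by rw [h2]
      _ = X ^ 2 := hY2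
  have hX1 : X = 1 := by
    have : X ^ 2 * X = X ^ 2 * 1 := by rw [mul_one, ← pow_succ]; exact hX3
    exact mul_left_cancel this
  have hY1 : Y = 1 := by
    have h1' := h1
    rw [hX1] at h1'
    have : Y * Y = Y * 1 := by simpa using h1'
    exact mul_left_cancel this
  -- transfer back
  have hxN : x ∈ N := by
    have : π x = 1 := hX1
    rwa [QuotientGroup.mk'_apply, QuotientGroup.eq_one_iff] at this
  have hyN : y ∈ N := by
    have : π y = 1 := hY1
    rwa [QuotientGroup.mk'_apply, QuotientGroup.eq_one_iff] at this
  rw [eq_top_iff, ← FreeGroup.closure_range_of (Fin 2), Subgroup.closure_le]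
  rintro g ⟨i, rfl⟩
  fin_cases i
  · exact hxN
  · exact hyN
end

section
/- For every n ≥ 1, the group presented by ⟨x, y | yxy = xyx, x^{n+1} = y^n⟩ is trivial. -/
open FreeGroup

lemma group_fact {G : Type*} [Group G] (n : ℕ) (x y : G)
    (h1 : y * x * y = x * y * x) (h2 : x ^ (n + 1) = y ^ n) :
    x = 1 ∧ y = 1 := by
  have hz : (x * y) * x * (x * y)⁻¹ = y := by
    rw [mul_inv_rev]
    calc x * y * x * (y⁻¹ * x⁻¹) = (x * y * x) * y⁻¹ * x⁻¹ := by group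
    _ = (y * x * y) * y⁻¹ * x⁻¹ := by rw [h1]
    _ = y := by group
  have hconj : ∀ k : ℕ, (x * y) * x ^ k * (x * y)⁻¹ = y ^ k := by
    intro k
    rw [← conj_pow, hz]
  have hc : (x * y) * x ^ (n + 1) * (x * y)⁻¹ = x ^ (n + 1) := by
    calc (x * y) * x ^ (n + 1) * (x * y)⁻¹ = x * (y * y ^ n * y⁻¹) * x⁻¹ := by
          rw [h2]; group
    _ = x * y ^ n * x⁻¹ := by rw [← pow_succ', pow_succ, mul_inv_cancel_right]
    _ = x * x ^ (n + 1) * x⁻¹ := by rw [h2]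
    _ = x ^ (n + 1) := by rw [← pow_succ', pow_succ, mul_inv_cancel_right]
  have hy1 : y ^ (n + 1) = y ^ n := by rw [← hconj (n + 1), hc, h2]
  have hy : y = 1 := by
    have := hy1
    rw [pow_succ] at this
    nth_rewrite 2 [← mul_one (y ^ n)] at this
    exact mul_left_cancel this
  have hx : x = 1 := by
    rw [hy, mul_one, one_mul, mul_one] at h1
    nth_rewrite 1 [← mul_one x] at h1
    exact (mul_left_cancel h1).symm
  exact ⟨hx, hy⟩

/-- For every `n ≥ 1`, the group presented by
`⟨x, y | yxy = xyx, x^(n+1) = y^n⟩` is trivial: the normal closure of the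
relators `yxyx⁻¹y⁻¹x⁻¹` and `x^(n+1) y^(-n)` is the whole free group. -/
theorem presentation_Ln1_trivial (n : ℕ) (hn : 1 ≤ n) :
    let x : FreeGroup (Fin 2) := FreeGroup.of 0
    let y : FreeGroup (Fin 2) := FreeGroup.of 1
    Subgroup.normalClosure
      ({y * x * y * x⁻¹ * y⁻¹ * x⁻¹, x ^ (n + 1) * y⁻¹ ^ n} :
        Set (FreeGroup (Fin 2))) = ⊤ := by
  intro x y
  set N := Subgroup.normalClosure
      ({y * x * y * x⁻¹ * y⁻¹ * x⁻¹, x ^ (n + 1) * y⁻¹ ^ n} :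
        Set (FreeGroup (Fin 2))) with hN
  let f := QuotientGroup.mk' N
  have hr1 : f (y * x * y * x⁻¹ * y⁻¹ * x⁻¹) = 1 := by
    rw [QuotientGroup.mk'_apply, QuotientGroup.eq_one_iff]
    exact Subgroup.subset_normalClosure (Set.mem_insert _ _)
  have hr2 : f (x ^ (n + 1) * y⁻¹ ^ n) = 1 := by
    rw [QuotientGroup.mk'_apply, QuotientGroup.eq_one_iff]
    exact Subgroup.subset_normalClosure (Set.mem_insert_of_mem _ rfl)
  have h1 : f y * f x * f y = f x * f y * f x := by
    have e := hr1
    simp only [_root_.map_mul, _root_.map_inv] at e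
    rw [← mul_inv_eq_one]
    calc f y * f x * f y * (f x * f y * f x)⁻¹
        = f y * f x * f y * (f x)⁻¹ * (f y)⁻¹ * (f x)⁻¹ := by group
      _ = 1 := e
  have h2 : (f x) ^ (n + 1) = (f y) ^ n := by
    have e := hr2
    simp only [_root_.map_mul, _root_.map_pow, _root_.map_inv] at e
    rw [← mul_inv_eq_one, ← inv_pow]
    exact e
  obtain ⟨hx, hy⟩ := group_fact n (f x) (f y) h1 h2
  have hxN : x ∈ N := (QuotientGroup.eq_one_iff x).1 hx
  have hyN : y ∈ N := (QuotientGroup.eq_one_iff y).1 hy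
  rw [eq_top_iff, ← FreeGroup.closure_range_of (Fin 2)]
  rw [Subgroup.closure_le]
  rintro g ⟨i, rfl⟩
  fin_cases i
  · exact hxN
  · exact hyN
end

section
/- In the free group on x and z, the pair of relators obtained from {x²y⁻¹xy⁻¹x²y⁻¹, x³y⁻²} under the substitution y = x²z⁻¹ normally generates the whole free group. -/
/-!
Write `y = x²z⁻¹`. Since `y⁻¹ = z x⁻²`, the first relator collapses to `x² z x⁻¹ z² x⁻²`,
a conjugate of `x⁻¹ z³`; so it forces `x = z³`. Then `y = z⁵` and the second relator
becomes `z⁹ z⁻¹⁰ = z⁻¹`, killing `z` and hence `x`.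
-/

namespace FreeGroup

theorem normalClosure_eq_top_of_forall_of_eq_one {α : Type*} {rels : Set (FreeGroup α)}
    (h : ∀ i, (PresentedGroup.of i : PresentedGroup rels) = 1) :
    Subgroup.normalClosure rels = ⊤ := by
  rw [eq_top_iff, ← closure_range_of, Subgroup.closure_le]
  rintro _ ⟨i, rfl⟩
  exact PresentedGroup.mk_eq_one_iff.mp (h i)

end FreeGroup

section

variable {G : Type*} [Group G]

theorem substituted_relator_eq_conj (a c : G) :
    a ^ 2 * (a ^ 2 * c⁻¹)⁻¹ * a * (a ^ 2 * c⁻¹)⁻¹ * a ^ 2 * (a ^ 2 * c⁻¹)⁻¹ =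
      (a ^ 2 * c) * (a⁻¹ * c ^ 3) * (a ^ 2 * c)⁻¹ := by
  simp [pow_succ, mul_assoc]

theorem eq_one_of_substituted_relators {a c : G}
    (h₁ : a ^ 2 * (a ^ 2 * c⁻¹)⁻¹ * a * (a ^ 2 * c⁻¹)⁻¹ * a ^ 2 * (a ^ 2 * c⁻¹)⁻¹ = 1)
    (h₂ : a ^ 3 * (a ^ 2 * c⁻¹)⁻¹ ^ 2 = 1) :
    a = 1 ∧ c = 1 := by
  rw [substituted_relator_eq_conj, conj_eq_one_iff, inv_mul_eq_one] at h₁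
  subst h₁
  have hc : c = 1 := by
    rw [← inv_eq_one, ← h₂]
    group
  simp [hc]

end

/-- In the free group on `x` and `z`, with `y := x²z⁻¹`, the relators
`x²y⁻¹xy⁻¹x²y⁻¹` and `x³y⁻²` normally generate the whole free group; that is,
the presented group `⟨x, z | x²y⁻¹xy⁻¹x²y⁻¹, x³y⁻²⟩` (with `y = x²z⁻¹`)
is trivial. -/
theorem substituted_relators_normally_generate :
    let x : FreeGroup (Fin 2) := FreeGroup.of 0
    let z : FreeGroup (Fin 2) := FreeGroup.of 1
    let y := x ^ 2 * z⁻¹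
    Subgroup.normalClosure
      ({x ^ 2 * y⁻¹ * x * y⁻¹ * x ^ 2 * y⁻¹, x ^ 3 * y⁻¹ ^ 2} :
        Set (FreeGroup (Fin 2))) = ⊤ := by
  intro x z y
  apply FreeGroup.normalClosure_eq_top_of_forall_of_eq_one
  set r₁ := x ^ 2 * y⁻¹ * x * y⁻¹ * x ^ 2 * y⁻¹
  set r₂ := x ^ 3 * y⁻¹ ^ 2
  have h₁ := PresentedGroup.one_of_mem (Set.mem_insert r₁ {r₂})
  have h₂ := PresentedGroup.one_of_mem (Set.mem_insert_of_mem r₁ (Set.mem_singleton r₂))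
  simp only [r₁, r₂, y, map_mul, map_inv, map_pow] at h₁ h₂
  obtain ⟨hx, hz⟩ := eq_one_of_substituted_relators h₁ h₂
  intro i
  fin_cases i
  · exact hx
  · exact hz
end
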